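/- Let ψ and φ be smooth complex-valued functions on an open connected set Λ ⊆ ℝ^d with ψ(x) ≠ 0 for all x ∈ Λ. If |φ|² = |ψ|² and Im(conj(φ)·∇φ) = Im(conj(ψ)·∇ψ) on Λ, then there exists a real constant C such that φ(x) = ψ(x)·exp(iC) for all x ∈ Λ. -/

import Mathlib

open Complex

theorem stmt_0 (d : ℕ) (Λ : Set (EuclideanSpace ℝ (Fin d)))
    (hΛo : IsOpen Λ) (hΛc : IsConnected Λ)
    (ψ φ : EuclideanSpace ℝ (Fin d) → ℂ)
    (hψ : ContDiff ℝ (⊤ : ℕ∞) ψ) (hφ : ContDiff ℝ (⊤ : ℕ∞) φ)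
    (hne : ∀ x ∈ Λ, ψ x ≠ 0)
    (hρ : ∀ x ∈ Λ, ‖φ x‖ ^ 2 = ‖ψ x‖ ^ 2)
    (hJ : ∀ x ∈ Λ, ∀ v : EuclideanSpace ℝ (Fin d),
      ((starRingEnd ℂ) (φ x) * fderiv ℝ φ x v).im
        = ((starRingEnd ℂ) (ψ x) * fderiv ℝ ψ x v).im) :
    ∃ C : ℝ, ∀ x ∈ Λ, φ x = ψ x * Complex.exp (Complex.I * C) := by
  classical
  obtain ⟨x₀, hx₀⟩ := hΛc.nonempty
  have hψd : Differentiable ℝ ψ := hψ.differentiable (by simp)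
  have hφd : Differentiable ℝ φ := hφ.differentiable (by simp)
  have habs : ∀ x ∈ Λ, ‖φ x‖ = ‖ψ x‖ := by
    intro x hx
    have h := hρ x hx
    nlinarith [norm_nonneg (φ x), norm_nonneg (ψ x)]
  have hφne : ∀ x ∈ Λ, φ x ≠ 0 := by
    intro x hx h
    apply hne x hx
    have h1 := habs x hx
    rw [h] at h1
    have h2 : ‖ψ x‖ = 0 := by simpa using h1.symm
    exact norm_eq_zero.mp h2
  -- conj φ * φ = conj ψ * ψ on Λ
  have hnormSq : ∀ x ∈ Λ, (starRingEnd ℂ) (φ x) * φ x = (starRingEnd ℂ) (ψ x) * ψ x := by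
    intro x hx
    rw [← Complex.normSq_eq_conj_mul_self, ← Complex.normSq_eq_conj_mul_self]
    have : Complex.normSq (φ x) = Complex.normSq (ψ x) := by
      rw [← Complex.sq_norm, ← Complex.sq_norm, hρ x hx]
    exact_mod_cast this
  set H : EuclideanSpace ℝ (Fin d) → ℂ :=
    fun x => (starRingEnd ℂ) (φ x) * φ x - (starRingEnd ℂ) (ψ x) * ψ x with hHdef
  have hH0 : ∀ x ∈ Λ, H x = 0 := by
    intro x hx
    simp [hHdef, hnormSq x hx]
  -- key: conj φ * ∇φ = conj ψ * ∇ψ on Λ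
  have hkey : ∀ x ∈ Λ, ∀ v, (starRingEnd ℂ) (φ x) * fderiv ℝ φ x v
      = (starRingEnd ℂ) (ψ x) * fderiv ℝ ψ x v := by
    intro x hx v
    have hφc : HasFDerivAt (fun y => (starRingEnd ℂ) (φ y))
        (Complex.conjCLE.toContinuousLinearMap.comp (fderiv ℝ φ x)) x :=
      Complex.conjCLE.hasFDerivAt.comp x (hφd x).hasFDerivAt
    have hψc : HasFDerivAt (fun y => (starRingEnd ℂ) (ψ y))
        (Complex.conjCLE.toContinuousLinearMap.comp (fderiv ℝ ψ x)) x :=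
      Complex.conjCLE.hasFDerivAt.comp x (hψd x).hasFDerivAt
    have hHd : HasFDerivAt H
        (((starRingEnd ℂ) (φ x) • fderiv ℝ φ x +
            φ x • Complex.conjCLE.toContinuousLinearMap.comp (fderiv ℝ φ x)) -
          ((starRingEnd ℂ) (ψ x) • fderiv ℝ ψ x +
            ψ x • Complex.conjCLE.toContinuousLinearMap.comp (fderiv ℝ ψ x))) x :=
      (hφc.mul (hφd x).hasFDerivAt).sub (hψc.mul (hψd x).hasFDerivAt)
    have hHzero : fderiv ℝ H x = 0 := by
      have hev : H =ᶠ[nhds x] (fun _ => (0 : ℂ)) := by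
        filter_upwards [hΛo.mem_nhds hx] with y hy using hH0 y hy
      rw [hev.fderiv_eq]
      exact fderiv_const_apply 0
    have h0 : ((starRingEnd ℂ) (φ x) * fderiv ℝ φ x v +
          φ x * (starRingEnd ℂ) (fderiv ℝ φ x v)) -
        ((starRingEnd ℂ) (ψ x) * fderiv ℝ ψ x v +
          ψ x * (starRingEnd ℂ) (fderiv ℝ ψ x v)) = 0 := by
      have := hHd.fderiv
      rw [hHzero] at this
      have := congrArg (fun (L : EuclideanSpace ℝ (Fin d) →L[ℝ] ℂ) => L v) this.symm
      simpa [smul_eq_mul] using this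
    set z := (starRingEnd ℂ) (φ x) * fderiv ℝ φ x v with hz
    set w := (starRingEnd ℂ) (ψ x) * fderiv ℝ ψ x v with hw
    have hconj1 : φ x * (starRingEnd ℂ) (fderiv ℝ φ x v) = (starRingEnd ℂ) z := by
      simp [hz, mul_comm]
    have hconj2 : ψ x * (starRingEnd ℂ) (fderiv ℝ ψ x v) = (starRingEnd ℂ) w := by
      simp [hw, mul_comm]
    rw [hconj1, hconj2] at h0
    have hre : z.re = w.re := by
      have := congrArg Complex.re h0
      simp [Complex.add_re, Complex.sub_re] at this
      linarith
    have him : z.im = w.im := hJ x hx v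
    exact Complex.ext hre him
  -- hence ψ ∇φ = φ ∇ψ on Λ
  have hcross : ∀ x ∈ Λ, ∀ v, ψ x * fderiv ℝ φ x v = φ x * fderiv ℝ ψ x v := by
    intro x hx v
    have h1 := hkey x hx v
    have h2 := hnormSq x hx
    have hcφ : (starRingEnd ℂ) (φ x) ≠ 0 := by
      simpa using hφne x hx
    apply mul_left_cancel₀ hcφ
    linear_combination ψ x * h1 - fderiv ℝ ψ x v * h2
  -- g = φ/ψ has zero derivative on Λ
  set g : EuclideanSpace ℝ (Fin d) → ℂ := fun x => φ x / ψ x with hgdef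
  have hgd : ∀ x ∈ Λ, HasFDerivAt g (0 : EuclideanSpace ℝ (Fin d) →L[ℝ] ℂ) x := by
    intro x hx
    have hinv : HasFDerivAt (fun y => (ψ y)⁻¹)
        ((-ContinuousLinearMap.mulLeftRight ℝ ℂ (ψ x)⁻¹ (ψ x)⁻¹).comp (fderiv ℝ ψ x)) x :=
      (hasFDerivAt_inv' (hne x hx)).comp x (hψd x).hasFDerivAt
    have hmul := (hφd x).hasFDerivAt.mul hinv
    have hzero : (φ x • (-ContinuousLinearMap.mulLeftRight ℝ ℂ (ψ x)⁻¹ (ψ x)⁻¹).comp (fderiv ℝ ψ x)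
        + (ψ x)⁻¹ • fderiv ℝ φ x) = 0 := by
      ext v
      have hc := hcross x hx v
      have hψx := hne x hx
      simp only [ContinuousLinearMap.add_apply, ContinuousLinearMap.smul_apply,
        ContinuousLinearMap.comp_apply, ContinuousLinearMap.neg_apply,
        ContinuousLinearMap.mulLeftRight_apply, ContinuousLinearMap.zero_apply, smul_eq_mul]
      have hd : fderiv ℝ φ x v = φ x * fderiv ℝ ψ x v * (ψ x)⁻¹ := by
        field_simp
        linear_combination hc
      rw [hd]
      field_simp
      ring
    rw [hzero] at hmul
    have : HasFDerivAt (fun y => φ y * (ψ y)⁻¹) (0 : EuclideanSpace ℝ (Fin d) →L[ℝ] ℂ) x := hmul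
    simpa [hgdef, div_eq_mul_inv] using this
  -- g is constant on Λ via open/closed argument with balls
  have hconst : ∀ x ∈ Λ, g x = g x₀ := by
    -- local constancy on balls inside Λ
    have hloc : ∀ x ∈ Λ, ∃ ε > 0, Metric.ball x ε ⊆ Λ ∧
        ∀ y ∈ Metric.ball x ε, g y = g x := by
      intro x hx
      obtain ⟨ε, hε, hball⟩ := Metric.isOpen_iff.mp hΛo x hx
      refine ⟨ε, hε, hball, fun y hy => ?_⟩
      have hconv : Convex ℝ (Metric.ball x ε) := convex_ball x ε
      refine hconv.is_const_of_fderivWithin_eq_zero (𝕜 := ℝ)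
        (fun z hz => ((hgd z (hball hz)).differentiableAt).differentiableWithinAt)
        (fun z hz => ?_) hy (Metric.mem_ball_self hε)
      rw [fderivWithin_of_isOpen Metric.isOpen_ball hz]
      exact (hgd z (hball hz)).fderiv
    set S : Set (EuclideanSpace ℝ (Fin d)) :=
      {x | ∃ ε > 0, Metric.ball x ε ⊆ Λ ∧ (∀ y ∈ Metric.ball x ε, g y = g x) ∧ g x = g x₀}
    set T : Set (EuclideanSpace ℝ (Fin d)) :=
      {x | ∃ ε > 0, Metric.ball x ε ⊆ Λ ∧ (∀ y ∈ Metric.ball x ε, g y = g x) ∧ g x ≠ g x₀}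
    have hSopen : IsOpen S := by
      rw [Metric.isOpen_iff]
      rintro x ⟨ε, hε, hball, hcst, hgx⟩
      refine ⟨ε, hε, fun y hy => ?_⟩
      obtain ⟨δ, hδ, hball', hcst'⟩ := hloc y (hball hy)
      exact ⟨δ, hδ, hball', hcst', (hcst y hy).trans hgx⟩
    have hTopen : IsOpen T := by
      rw [Metric.isOpen_iff]
      rintro x ⟨ε, hε, hball, hcst, hgx⟩
      refine ⟨ε, hε, fun y hy => ?_⟩
      obtain ⟨δ, hδ, hball', hcst'⟩ := hloc y (hball hy)
      exact ⟨δ, hδ, hball', hcst', (hcst y hy).trans_ne hgx⟩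
    have hsub : Λ ⊆ S ∪ T := by
      intro x hx
      obtain ⟨ε, hε, hball, hcst⟩ := hloc x hx
      by_cases h : g x = g x₀
      · exact Or.inl ⟨ε, hε, hball, hcst, h⟩
      · exact Or.inr ⟨ε, hε, hball, hcst, h⟩
    intro x hx
    by_contra hgx
    obtain ⟨ε, hε, hball, hcst⟩ := hloc x hx
    obtain ⟨ε', hε', hball', hcst'⟩ := hloc x₀ hx₀
    have hne' : (Λ ∩ (S ∩ T)).Nonempty :=
      hΛc.isPreconnected S T hSopen hTopen hsub
        ⟨x₀, hx₀, ε', hε', hball', hcst', rfl⟩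
        ⟨x, hx, ε, hε, hball, hcst, hgx⟩
    obtain ⟨y, _, ⟨_, _, _, _, hy1⟩, ⟨_, _, _, _, hy2⟩⟩ := hne'
    exact hy2 hy1
  -- conclude
  have habs1 : ‖g x₀‖ = 1 := by
    rw [hgdef]
    simp only [norm_div]
    rw [habs x₀ hx₀, div_self]
    simpa using hne x₀ hx₀
  refine ⟨(g x₀).arg, fun x hx => ?_⟩
  have hexp : Complex.exp (Complex.I * ((g x₀).arg : ℂ)) = g x₀ := by
    have := Complex.norm_mul_exp_arg_mul_I (g x₀)
    rw [habs1] at this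
    rw [mul_comm]
    simpa using this
  rw [hexp, ← hconst x hx, hgdef]
  rw [mul_comm, div_mul_cancel₀ _ (hne x hx)]
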